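/- arXiv:1612.02901 — 2 statements merged into one kernel-verified Lean document; each statement's English description precedes it below -/
import Mathlib

section
/- Let H be an S-Hadamard matrix of order n whose first row is the all-one vector, and define the vectors v^{r,s} (1 ≤ r ≠ s ≤ n+1) from the rows of H as follows: v^{1,s} = h_{s-1} for 1 < s ≤ n+1; v^{2,s} = h_{s-1} ∘ h_{s-1} for 2 < s ≤ n+1; v^{r,s} = h_{r-1} ∘ h_{s-1} for 2 < r < s ≤ n+1; and v^{s,r} = v^{r,s}. Then for all pairwise distinct i, j, k ∈ {1,…,n+1}, we have v^{i,j} ≠ v^{i,k}. -/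
open scoped Classical

/-- The standard inner product on `ℂ^n`: `⟨x,y⟩ = ∑ i, x i * conj (y i)`. -/
noncomputable def sinner {n : ℕ} (x y : Fin n → ℂ) : ℂ :=
  ∑ i, x i * (starRingEnd ℂ) (y i)

/-- An `n × n` complex matrix `H` is an S-Hadamard matrix of order `n` if
(1) `H * Hᴴ = n • 1`, (2) all entries are unimodular, and
(3) for all rows `k ≠ ℓ`, `∑ j, (H k j)² * conj ((H ℓ j)²) = 0`. -/
def IsSHadamard {n : ℕ} (H : Matrix (Fin n) (Fin n) ℂ) : Prop :=
  (H * H.conjTranspose = (n : ℂ) • 1) ∧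
  (∀ i j, ‖H i j‖ = 1) ∧
  (∀ k l : Fin n, k ≠ l → ∑ j, (H k j) ^ 2 * (starRingEnd ℂ) ((H l j) ^ 2) = 0)

/-- The row of `H` with 1-based label `m`, i.e. `ksRow H m = h_m` for
`1 ≤ m ≤ n` (junk value outside this range). -/
noncomputable def ksRow {n : ℕ} (H : Matrix (Fin n) (Fin n) ℂ) (m : ℕ) :
    Fin n → ℂ :=
  fun j => if h : m - 1 < n then H ⟨m - 1, h⟩ j else 0

/-- The vector `v^{r,s}` (1-based labels `1 ≤ r ≠ s ≤ n+1`), built from the rows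
of `H`: `v^{1,s} = h_{s-1}`, `v^{2,s} = h_{s-1} ∘ h_{s-1}` for `s > 2`, and
`v^{r,s} = h_{r-1} ∘ h_{s-1}` for `2 < r < s`, extended symmetrically
(`v^{s,r} = v^{r,s}`), where `∘` is the entrywise product. -/
noncomputable def ksVec {n : ℕ} (H : Matrix (Fin n) (Fin n) ℂ) (r s : ℕ) :
    Fin n → ℂ :=
  if min r s = 1 then ksRow H (max r s - 1)
  else if min r s = 2 then fun j => ksRow H (max r s - 1) j * ksRow H (max r s - 1) j
  else fun j => ksRow H (min r s - 1) j * ksRow H (max r s - 1) j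

/-!
The rows of an S-Hadamard matrix are unimodular and pairwise orthogonal, and by condition (3)
so are their entrywise squares; orthogonal unimodular vectors are distinct. Since the first row
is all ones, `v^{1,m}` is the row `h_{m-1}`, `v^{2,m}` is the square of a row (`h_1 ∘ h_1` when
`m = 1`), and for `i ≥ 3` every `v^{i,m}` is `h_{i-1} ∘ h_p` for a row label `p` depending
injectively on `m`; cancelling the unimodular factor `h_{i-1}` reduces everything to distinctness
of rows or of squared rows.
-/

theorem sinner_self_of_norm_eq_one {n : ℕ} {x : Fin n → ℂ} (hx : ∀ j, ‖x j‖ = 1) :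
    sinner x x = n := by
  simp [sinner, Complex.mul_conj, Complex.normSq_eq_norm_sq, hx]

theorem ne_of_sinner_eq_zero {n : ℕ} [NeZero n] {x y : Fin n → ℂ} (hx : ∀ j, ‖x j‖ = 1)
    (hxy : sinner x y = 0) : x ≠ y := by
  rintro rfl
  rw [sinner_self_of_norm_eq_one hx] at hxy
  exact NeZero.ne n (by exact_mod_cast hxy)

namespace IsSHadamard

variable {n : ℕ} {H : Matrix (Fin n) (Fin n) ℂ}

theorem sinner_row_eq_zero (hH : IsSHadamard H) {a b : Fin n} (hab : a ≠ b) :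
    sinner (H a) (H b) = 0 := by
  simpa [Matrix.mul_apply, Matrix.one_apply, hab, sinner] using congrFun (congrFun hH.1 a) b

theorem row_injective (hH : IsSHadamard H) : Function.Injective H := by
  intro a b hab
  by_contra hne
  have : NeZero n := NeZero.of_pos a.pos
  exact ne_of_sinner_eq_zero (hH.2.1 a) (hH.sinner_row_eq_zero hne) hab

theorem row_sq_injective (hH : IsSHadamard H) : Function.Injective fun a => H a ^ 2 := by
  intro a b hab
  by_contra hne
  have : NeZero n := NeZero.of_pos a.pos
  exact ne_of_sinner_eq_zero (fun j => by simp [norm_pow, hH.2.1 a j]) (hH.2.2 a b hne) hab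

theorem isUnit_row (hH : IsSHadamard H) (a : Fin n) : IsUnit (H a) :=
  Pi.isUnit_iff.2 fun j => (norm_ne_zero_iff.1 (by simp [hH.2.1 a j])).isUnit

end IsSHadamard

section ksRow

variable {n : ℕ} {H : Matrix (Fin n) (Fin n) ℂ}

theorem ksRow_eq_row {m : ℕ} (hm : m ∈ Set.Icc 1 n) :
    ksRow H m = H ⟨m - 1, by grind⟩ :=
  funext fun _ => dif_pos _

theorem IsSHadamard.ksRow_injOn (hH : IsSHadamard H) : Set.InjOn (ksRow H) (Set.Icc 1 n) := by
  intro p hp q hq hpq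
  rw [ksRow_eq_row hp, ksRow_eq_row hq] at hpq
  have := Fin.val_eq_of_eq (hH.row_injective hpq)
  grind

theorem IsSHadamard.ksRow_sq_injOn (hH : IsSHadamard H) :
    Set.InjOn (fun m => ksRow H m ^ 2) (Set.Icc 1 n) := by
  intro p hp q hq hpq
  simp only [ksRow_eq_row hp, ksRow_eq_row hq] at hpq
  have := Fin.val_eq_of_eq (hH.row_sq_injective hpq)
  grind

theorem IsSHadamard.isUnit_ksRow (hH : IsSHadamard H) {m : ℕ} (hm : m ∈ Set.Icc 1 n) :
    IsUnit (ksRow H m) := by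
  rw [ksRow_eq_row hm]
  exact hH.isUnit_row _

end ksRow

section ksVec

variable {n : ℕ} {H : Matrix (Fin n) (Fin n) ℂ}

theorem ksVec_comm (r s : ℕ) : ksVec H r s = ksVec H s r := by
  unfold ksVec
  rw [min_comm, max_comm]

theorem ksVec_one_left {s : ℕ} (hs : 1 ≤ s) : ksVec H 1 s = ksRow H (s - 1) := by
  rw [ksVec, if_pos (min_eq_left hs), max_eq_right hs]

theorem ksVec_two_left {s : ℕ} (hs : 2 ≤ s) : ksVec H 2 s = ksRow H (s - 1) ^ 2 := by
  rw [ksVec, if_neg (by omega), if_pos (min_eq_left hs), max_eq_right hs, sq]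
  rfl

theorem ksVec_of_three_le {r s : ℕ} (hr : 3 ≤ r) (hs : 3 ≤ s) :
    ksVec H r s = ksRow H (r - 1) * ksRow H (s - 1) := by
  rcases le_total r s with h | h
  · rw [ksVec, if_neg (by omega), if_neg (by omega), min_eq_left h, max_eq_right h]
    rfl
  · rw [ksVec_comm, ksVec, if_neg (by omega), if_neg (by omega), min_eq_left h, max_eq_right h,
      mul_comm]
    rfl

theorem ksVec_two_eq_sq (hrow1 : ksRow H 1 = 1) {m : ℕ} (hm : 1 ≤ m) :
    ksVec H 2 m = ksRow H (if m = 1 then 1 else m - 1) ^ 2 := by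
  split_ifs with h
  · rw [h, ksVec_comm, ksVec_one_left one_le_two]
    simp [hrow1]
  · exact ksVec_two_left (by omega)

theorem ksVec_eq_ksRow_mul (hrow1 : ksRow H 1 = 1) {i m : ℕ} (hi : 3 ≤ i) (hm : 1 ≤ m) :
    ksVec H i m =
      ksRow H (i - 1) * ksRow H (if m = 1 then 1 else if m = 2 then i - 1 else m - 1) := by
  split_ifs with h1 h2
  · rw [h1, ksVec_comm, ksVec_one_left (by omega), hrow1, mul_one]
  · rw [h2, ksVec_comm, ksVec_two_left (by omega), sq]
  · exact ksVec_of_three_le hi (by omega)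

end ksVec

/-- If `H` is an S-Hadamard matrix of order `n` whose first row is the all-one
vector, then for pairwise distinct `i, j, k ∈ {1,…,n+1}` we have
`v^{i,j} ≠ v^{i,k}`. -/
theorem ksVec_ne_of_distinct {n : ℕ} (H : Matrix (Fin n) (Fin n) ℂ)
    (hH : IsSHadamard H) (hrow : ∀ j, ksRow H 1 j = 1)
    (i j k : ℕ) (hi1 : 1 ≤ i) (hi2 : i ≤ n + 1) (hj1 : 1 ≤ j) (hj2 : j ≤ n + 1)
    (hk1 : 1 ≤ k) (hk2 : k ≤ n + 1)
    (hij : i ≠ j) (hik : i ≠ k) (hjk : j ≠ k) :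
    ksVec H i j ≠ ksVec H i k := by
  have hrow1 : ksRow H 1 = 1 := funext hrow
  rcases (by omega : i = 1 ∨ i = 2 ∨ 3 ≤ i) with rfl | rfl | hi
  · rw [ksVec_one_left hj1, ksVec_one_left hk1]
    exact hH.ksRow_injOn.ne ⟨by omega, by omega⟩ ⟨by omega, by omega⟩ (by omega)
  · rw [ksVec_two_eq_sq hrow1 hj1, ksVec_two_eq_sq hrow1 hk1]
    exact hH.ksRow_sq_injOn.ne (by split_ifs <;> constructor <;> omega)
      (by split_ifs <;> constructor <;> omega) (by split_ifs <;> omega)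
  · rw [ksVec_eq_ksRow_mul hrow1 hi hj1, ksVec_eq_ksRow_mul hrow1 hi hk1]
    intro h
    refine hH.ksRow_injOn.ne ?_ ?_ ?_ ((hH.isUnit_ksRow ⟨by omega, by omega⟩).mul_left_cancel h)
    all_goals split_ifs <;> first | omega | constructor <;> omega
end

section
/- Suppose n is even and there exists an S-Hadamard matrix of order n. Then there exists a Kochen-Specker pair (V, B) in ℂ^n such that |V| ≤ binom(n+1, 2) = (n+1)n/2 and the list B has length n+1. -/
open scoped Classical

/-- A finite set of vectors is an orthogonal basis of `ℂ^n` if its elements are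
pairwise orthogonal (w.r.t. the standard inner product), linearly independent,
and span `ℂ^n`. -/
def IsOrthBasis {n : ℕ} (b : Finset (Fin n → ℂ)) : Prop :=
  (∀ x ∈ b, ∀ y ∈ b, x ≠ y → sinner x y = 0) ∧
  LinearIndependent ℂ (Subtype.val : {x // x ∈ b} → (Fin n → ℂ)) ∧
  Submodule.span ℂ (b : Set (Fin n → ℂ)) = ⊤

/-- A Kochen–Specker pair `(V, B)` in `ℂ^n`, with `B = (B_1, …, B_k)`. -/
structure IsKSPair (n k : ℕ) (V : Finset (Fin n → ℂ))
    (B : Fin k → Finset (Fin n → ℂ)) : Prop where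
  odd_k : Odd k
  subset_V : ∀ i, B i ⊆ V
  basis : ∀ i, IsOrthBasis (B i)
  even_count : ∀ v ∈ V, Even ((Finset.univ.filter (fun i => v ∈ B i)).card)


/-!
Write `h_k` for the rows of `H` and `h_k h_l` for entrywise products. For fixed `k` the vectors
`h_k h_l` form an orthogonal basis, since multiplying by the unimodular `h_k` preserves the inner
product and the rows are orthogonal; condition (3) says exactly that the squares `h_l h_l` form one
more orthogonal basis. These `n + 1` bases (an odd number, as `n` is even) use only the
`(n + 1).choose 2` vectors `h_k h_l = h_l h_k`. A vector `v` lies in as many bases as there are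
ordered pairs `(k, l)` with `h_k h_l = v`, plus diagonal indices `k` with `h_k h_k = v`; the swap
`(k, l) ↦ (l, k)` pairs up the off-diagonal solutions, and the diagonal ones are counted twice.
-/

open Finset

theorem sinner_sum_smul_left {n : ℕ} {ι : Type*} (s : Finset ι) (g : ι → ℂ)
    (v : ι → Fin n → ℂ) (w : Fin n → ℂ) :
    sinner (∑ i ∈ s, g i • v i) w = ∑ i ∈ s, g i * sinner (v i) w := by
  simp only [sinner, Finset.sum_apply, Pi.smul_apply, smul_eq_mul, sum_mul, mul_sum, mul_assoc]
  exact sum_comm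

theorem IsOrthBasis.of_orthogonal_of_card_eq {n : ℕ} {s : Finset (Fin n → ℂ)}
    (hself : ∀ x ∈ s, sinner x x ≠ 0)
    (horth : ∀ x ∈ s, ∀ y ∈ s, x ≠ y → sinner x y = 0) (hcard : s.card = n) :
    IsOrthBasis s := by
  have hli : LinearIndependent ℂ (Subtype.val : {x // x ∈ s} → (Fin n → ℂ)) := by
    refine Fintype.linearIndependent_iff.mpr fun g hg x => ?_
    have hx : sinner (∑ y, g y • y.val) x.val = g x * sinner x.val x.val := by
      rw [sinner_sum_smul_left, sum_eq_single x]
      · intro y _ hyx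
        rw [horth y y.2 x x.2 (Subtype.coe_ne_coe.mpr hyx), mul_zero]
      · simp
    rw [hg, show sinner (0 : Fin n → ℂ) x.val = 0 by simp [sinner]] at hx
    exact (mul_eq_zero.mp hx.symm).resolve_right (hself x x.2)
  refine ⟨horth, hli, ?_⟩
  simpa using hli.span_eq_top_of_card_eq_finrank' (by simp [hcard])

theorem injective_of_orthogonal {n : ℕ} {ι : Type*} {v : ι → Fin n → ℂ}
    (hself : ∀ i, sinner (v i) (v i) ≠ 0) (horth : Pairwise fun i j => sinner (v i) (v j) = 0) :
    Function.Injective v := by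
  intro i j hij
  by_contra hne
  exact hself j (by simpa [hij] using horth hne)

theorem isOrthBasis_image_of_orthogonal {n : ℕ} {ι : Type*} [Fintype ι]
    {v : ι → Fin n → ℂ} (hself : ∀ i, sinner (v i) (v i) ≠ 0)
    (horth : Pairwise fun i j => sinner (v i) (v j) = 0) (hcard : Fintype.card ι = n) :
    IsOrthBasis (univ.image v) := by
  refine IsOrthBasis.of_orthogonal_of_card_eq ?_ ?_ ?_
  · simpa using hself
  · simp only [mem_image, mem_univ, true_and]
    rintro _ ⟨i, rfl⟩ _ ⟨j, rfl⟩ hne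
    exact horth fun h => hne (congrArg v h)
  · rw [card_image_of_injective _ (injective_of_orthogonal hself horth), card_univ, hcard]

theorem CharTwo.sum_sum_eq_sum_diag_of_symm {R ι : Type*} [Semiring R] [CharP R 2] [Fintype ι]
    [DecidableEq ι] {g : ι → ι → R} (hg : ∀ i j, g i j = g j i) :
    ∑ i, ∑ j, g i j = ∑ i, g i i := by
  have hoff : ∑ p ∈ univ.offDiag, g p.1 p.2 = 0 :=
    sum_involution (fun p _ => p.swap)
      (fun p _ => by rw [Prod.fst_swap, Prod.snd_swap, hg p.2, CharTwo.add_self_eq_zero])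
      (fun p hp _ h => (mem_offDiag.mp hp).2.2 (congrArg Prod.snd h))
      (fun p hp => by simpa [eq_comm] using hp) (fun p _ => p.swap_swap)
  rw [← Fintype.sum_prod_type', ← univ_product_univ, ← diag_union_offDiag,
    sum_union (disjoint_diag_offDiag _), hoff, add_zero, sum_diag]

theorem even_sum_card_fiber_add_card_diag_fiber {ι α : Type*} [Fintype ι] [DecidableEq ι]
    [DecidableEq α] {f : ι → ι → α} (hf : ∀ i j, f i j = f j i) (a : α) :
    Even (∑ i, (univ.filter fun j => f i j = a).card +
      (univ.filter fun i => f i i = a).card) := by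
  rw [← ZMod.natCast_eq_zero_iff_even]
  push_cast [card_filter]
  rw [CharTwo.sum_sum_eq_sum_diag_of_symm fun i j => by rw [hf], CharTwo.add_self_eq_zero]

theorem card_filter_mem_image_eq_sum_card_fiber {κ ι α : Type*} [Fintype κ] [Fintype ι]
    [DecidableEq α] {g : κ → ι → α} (hg : ∀ i, Function.Injective (g i)) (a : α) :
    (univ.filter fun i => a ∈ univ.image (g i)).card =
      ∑ i, (univ.filter fun j => g i j = a).card := by
  rw [card_filter]
  refine sum_congr rfl fun i _ => ?_
  split_ifs with ha
  · obtain ⟨j, -, rfl⟩ := mem_image.mp ha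
    exact (card_eq_one.mpr ⟨j, by ext; simp [(hg i).eq_iff]⟩).symm
  · rw [eq_comm, card_eq_zero, filter_eq_empty_iff]
    simpa using ha

theorem sinner_mul_mul_left {n : ℕ} {u x y : Fin n → ℂ} (hu : ∀ j, ‖u j‖ = 1) :
    sinner (u * x) (u * y) = sinner x y := by
  refine sum_congr rfl fun j _ => ?_
  have hj : u j * (starRingEnd ℂ) (u j) = 1 := by
    rw [Complex.mul_conj, Complex.normSq_eq_norm_sq, hu j]; simp
  simp only [Pi.mul_apply, map_mul]
  linear_combination (x j * (starRingEnd ℂ) (y j)) * hj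

noncomputable def ksFamily {n : ℕ} (H : Matrix (Fin n) (Fin n) ℂ) :
    Fin (n + 1) → Fin n → Fin n → ℂ :=
  Fin.snoc (fun k l => H k * H l) fun k => H k * H k

noncomputable def sym2RowProd {n : ℕ} (H : Matrix (Fin n) (Fin n) ℂ) :
    Sym2 (Fin n) → Fin n → ℂ :=
  Sym2.lift ⟨fun k l => H k * H l, fun k l => mul_comm (H k) (H l)⟩

theorem ksFamily_mem_range_sym2RowProd {n : ℕ} (H : Matrix (Fin n) (Fin n) ℂ)
    (i : Fin (n + 1)) (j : Fin n) : ksFamily H i j ∈ Set.range (sym2RowProd H) := by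
  induction i using Fin.lastCases with
  | last => exact ⟨s(j, j), by simp [ksFamily, sym2RowProd]⟩
  | cast k => exact ⟨s(k, j), by simp [ksFamily, sym2RowProd]⟩

namespace IsSHadamard

variable {n : ℕ} {H : Matrix (Fin n) (Fin n) ℂ}

theorem sinner_rows (hH : IsSHadamard H) (k l : Fin n) :
    sinner (H k) (H l) = if k = l then (n : ℂ) else 0 := by
  simpa [Matrix.mul_apply, Matrix.one_apply, sinner] using congrFun (congrFun hH.1 k) l

theorem sinner_mul_rows_left (hH : IsSHadamard H) (k l l' : Fin n) :
    sinner (H k * H l) (H k * H l') = if l = l' then (n : ℂ) else 0 := by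
  rw [sinner_mul_mul_left (hH.2.1 k), hH.sinner_rows]

theorem sinner_mul_self_rows (hH : IsSHadamard H) {k l : Fin n} (hkl : k ≠ l) :
    sinner (H k * H k) (H l * H l) = 0 := by
  simpa [sinner, sq] using hH.2.2 k l hkl

theorem sinner_ksFamily (hH : IsSHadamard H) (i : Fin (n + 1)) (j j' : Fin n) :
    sinner (ksFamily H i j) (ksFamily H i j') = if j = j' then (n : ℂ) else 0 := by
  induction i using Fin.lastCases with
  | last =>
    simp only [ksFamily, Fin.snoc_last]
    split_ifs with h
    · rw [h, hH.sinner_mul_rows_left, if_pos rfl]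
    · exact hH.sinner_mul_self_rows h
  | cast k =>
    simp only [ksFamily, Fin.snoc_castSucc]
    exact hH.sinner_mul_rows_left k j j'

theorem sinner_ksFamily_self_ne_zero (hH : IsSHadamard H) (i : Fin (n + 1)) (j : Fin n) :
    sinner (ksFamily H i j) (ksFamily H i j) ≠ 0 := by
  rw [hH.sinner_ksFamily, if_pos rfl]
  exact_mod_cast j.pos.ne'

theorem pairwise_sinner_ksFamily (hH : IsSHadamard H) (i : Fin (n + 1)) :
    Pairwise fun j j' => sinner (ksFamily H i j) (ksFamily H i j') = 0 :=
  fun j j' h => by simp only [hH.sinner_ksFamily, if_neg h]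

end IsSHadamard

/-- If `n` is even and an S-Hadamard matrix of order `n` exists, then there is a
Kochen–Specker pair `(V, B)` in `ℂ^n` with `|V| ≤ C(n+1, 2)` and `|B| = n + 1`. -/
theorem ks_pair_of_sHadamard {n : ℕ} (hn : Even n)
    (hH : ∃ H : Matrix (Fin n) (Fin n) ℂ, IsSHadamard H) :
    ∃ (V : Finset (Fin n → ℂ)) (B : Fin (n + 1) → Finset (Fin n → ℂ)),
      IsKSPair n (n + 1) V B ∧ V.card ≤ (n + 1).choose 2 := by
  obtain ⟨H, hH⟩ := hH
  have hinj i := injective_of_orthogonal (hH.sinner_ksFamily_self_ne_zero i)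
    (hH.pairwise_sinner_ksFamily i)
  refine ⟨univ.image (sym2RowProd H), fun i => univ.image (ksFamily H i),
    ⟨hn.add_one, fun i => ?_, fun i => ?_, fun v _ => ?_⟩, ?_⟩
  · simpa [image_subset_iff] using ksFamily_mem_range_sym2RowProd H i
  · exact isOrthBasis_image_of_orthogonal (hH.sinner_ksFamily_self_ne_zero i)
      (hH.pairwise_sinner_ksFamily i) (Fintype.card_fin n)
  · rw [card_filter_mem_image_eq_sum_card_fiber hinj, Fin.sum_univ_castSucc]
    simpa only [ksFamily, Fin.snoc_castSucc, Fin.snoc_last] using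
      even_sum_card_fiber_add_card_diag_fiber (fun k l => mul_comm (H k) (H l)) v
  · calc _ ≤ Fintype.card (Sym2 (Fin n)) := card_image_le
      _ = (n + 1).choose 2 := by rw [Sym2.card, Fintype.card_fin]
end
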